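/- Let (T_k)_{k≥1} be a sequence of random N-ary recursive trees. For every k ≥ 1, every N-tuple i = (i_1,…,i_N) of non-negative integers with i_1+…+i_N = k−1, the vector of subtree sizes satisfies P{|T_k^{(1)}| = i_1, …, |T_k^{(N)}| = i_N} = p_k(i) where p_k(i) = ( (k−1)! / (i_1!⋯i_N!) ) · ( ∏_{l=1}^N ∏_{m=0}^{i_l−1} f_m ) / ( ∏_{r=0}^{k−1} f_r ), with f_m = (N−1)m+1 and the empty product equal to 1. Moreover, for every N-ary tree t of size k with subtrees t^{(1)},…,t^{(N)} of sizes i_1,…,i_N, one has P{T_k^{(1)} = t^{(1)}, …, T_k^{(N)} = t^{(N)} | |T_k^{(j)}| = i_j for all j} = ∏_{j=1}^N P{T_{i_j} = t^{(j)}}; that is, conditionally on the subtree sizes, the N subtrees of the root are independent random recursive trees of the given sizes. -/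

import Mathlib

/-!
Under the growth law every history of length `k` (the sequence of inserted nodes) has
probability `∏_{r<k} 1/f_r`, and there are `∏_{r<k} f_r` of them, so the probability of an event
about `T_k` is the proportion of histories of length `k` producing it. A history of the tree with
root subtrees `t_1, …, t_N` is the root followed by an interleaving of histories of the `t_j`, so
the number of such histories is `(k-1)! / ∏ |t_j|!` times the product of the numbers of
histories of the `t_j`. Summing over subtrees of sizes `i` gives `p_k(i)`, and dividing the two
counts gives the conditional independence.
-/

open MeasureTheory ProbabilityTheory Filter Finset
open scoped ENNReal NNReal

namespace KacNary

/-- Nodes of the infinite `N`-ary tree: finite strings over `{0,…,N-1}`. -/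
abbrev Node (N : ℕ) := List (Fin N)

/-- Number of leaves of an `N`-ary tree of size `k`:  `f_k = (N-1)k+1`. -/
def nleaves (N k : ℕ) : ℕ := (N - 1) * k + 1

/-- The set of leaves of the `N`-ary tree whose set of internal nodes is `s`. -/
def leavesOf {N : ℕ} (s : Finset (Node N)) : Finset (Node N) :=
  if s = ∅ then {([] : Node N)}
  else (s.biUnion fun v => (Finset.univ : Finset (Fin N)).image fun j => v ++ [j]) \ s

/-- One admissible step of the growth process: a leaf of `s` becomes an internal node. -/
def Step {N : ℕ} (s s' : Finset (Node N)) : Prop :=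
  ∃ v ∈ leavesOf s, s' = insert v s

/-- The set of internal nodes of the `j`-th root subtree. -/
def subtree {N : ℕ} (s : Finset (Node N)) (j : Fin N) : Finset (Node N) :=
  (s.filter fun v => v.head? = some j).image List.tail

/-- `s` is (the set of internal nodes of) an `N`-ary tree: it is closed under parents. -/
def IsTree {N : ℕ} (s : Finset (Node N)) : Prop :=
  ∀ v ∈ s, ∀ (w : Node N) (j : Fin N), v = w ++ [j] → w ∈ s

/-- `p_k(i) = ((k-1)!/(i_1!⋯i_N!)) ∏_{l=1}^N ∏_{m=0}^{i_l-1} f_m / ∏_{r=0}^{k-1} f_r`. -/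
noncomputable def pk (N k : ℕ) (i : Fin N → ℕ) : ℝ≥0∞ :=
  ((Nat.factorial (k - 1) * ∏ l, ∏ m ∈ Finset.range (i l), nleaves N m : ℕ) : ℝ≥0∞) /
    (((∏ l, Nat.factorial (i l)) * ∏ r ∈ Finset.range k, nleaves N r : ℕ) : ℝ≥0∞)

open scoped Nat

lemma inv_div_mul_div_cancel_right {a b c : ℝ≥0∞} (hc : c ≠ 0) (hc' : c ≠ ⊤) :
    (a / c)⁻¹ * (b / c) = b / a := by
  rw [ENNReal.inv_div (.inl hc') (.inl hc), div_eq_mul_inv, div_eq_mul_inv, div_eq_mul_inv]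
  calc c * a⁻¹ * (b * c⁻¹) = b * a⁻¹ * (c * c⁻¹) := by ring
    _ = b * a⁻¹ := by rw [ENNReal.mul_inv_cancel hc hc', mul_one]

lemma prod_apply_update {ι M X : Type*} [Fintype ι] [DecidableEq ι] [CommMonoid M]
    (g : X → M) (t : ι → X) (j : ι) (x : X) :
    ∏ i, g (Function.update t j x i) = g x * ∏ i ∈ univ \ {j}, g (t i) := by
  rw [Finset.prod_congr rfl fun i _ => Function.apply_update (fun _ => g) t j x i,
    Finset.prod_update_of_mem (mem_univ j)]

/-- Counting interleavings: if `C x` counts the ways of dismantling `x` by successive `remove`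
steps, and `B t` counts the ways of dismantling all the `t i` together, then `B t` is the
multinomial coefficient of the sizes times `∏ i, C (t i)`. -/
theorem mul_prod_factorial_eq_of_recursion {ι X α : Type*} [Fintype ι] [DecidableEq ι]
    (valid : X → Prop) (size : X → ℕ) (cut : X → Finset α) (remove : X → α → X)
    (C : X → ℕ) (B : (ι → X) → ℕ)
    (valid_remove : ∀ x a, valid x → a ∈ cut x → valid (remove x a))
    (size_remove : ∀ x a, a ∈ cut x → size (remove x a) + 1 = size x)
    (hC : ∀ x, valid x → size x ≠ 0 → C x = ∑ a ∈ cut x, C (remove x a))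
    (hB : ∀ t : ι → X, (∀ i, valid (t i)) → ∑ i, size (t i) ≠ 0 →
      B t = ∑ i, ∑ a ∈ cut (t i), B (Function.update t i (remove (t i) a)))
    (hB₀ : ∀ t : ι → X, (∀ i, size (t i) = 0) → B t = ∏ i, C (t i))
    (t : ι → X) (ht : ∀ i, valid (t i)) :
    B t * ∏ i, (size (t i))! = (∑ i, size (t i))! * ∏ i, C (t i) := by
  induction hn : ∑ i, size (t i) generalizing t with
  | zero =>
    have h₀ : ∀ i, size (t i) = 0 := by simpa using hn
    simp [hB₀ t h₀, h₀]
  | succ n ih =>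
    have hterm (i : ι) (a : α) (ha : a ∈ cut (t i)) :
        B (Function.update t i (remove (t i) a)) * ∏ i', (size (t i'))! =
          size (t i) * (n ! * (C (remove (t i) a) * ∏ i' ∈ univ \ {i}, C (t i'))) := by
      have hsize := size_remove _ _ ha
      have hsum : ∑ i', size (Function.update t i (remove (t i) a) i') = n := by
        rw [Finset.sum_congr rfl fun i' _ => Function.apply_update (fun _ => size) t i _ i',
          Finset.sum_update_of_mem (mem_univ i)]
        rw [Finset.sum_eq_add_sum_sdiff_singleton_of_mem (mem_univ i)] at hn
        omega
      have hvalid (i' : ι) : valid (Function.update t i (remove (t i) a) i') := by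
        rcases eq_or_ne i' i with rfl | hi'
        · simpa using valid_remove _ _ (ht i') ha
        · simpa [hi'] using ht i'
      rw [Finset.prod_eq_mul_prod_sdiff_singleton_of_mem (mem_univ i), ← hsize,
        Nat.factorial_succ, mul_assoc, mul_left_comm, ← prod_apply_update (fun x => (size x)!),
        ih _ hvalid hsum, prod_apply_update C]
    have hcut (i : ι) :
        size (t i) * ∑ a ∈ cut (t i), C (remove (t i) a) = size (t i) * C (t i) := by
      rcases eq_or_ne (size (t i)) 0 with h | h
      · simp [h]
      · rw [← hC _ (ht i) h]
    rw [hB t ht (by omega), Finset.sum_mul]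
    calc ∑ i, (∑ a ∈ cut (t i), B (Function.update t i (remove (t i) a))) *
          ∏ i', (size (t i'))!
        = ∑ i, n ! * (size (t i) * C (t i) * ∏ i' ∈ univ \ {i}, C (t i')) := by
          refine Finset.sum_congr rfl fun i _ => ?_
          rw [Finset.sum_mul, Finset.sum_congr rfl (hterm i), ← Finset.mul_sum,
            ← Finset.mul_sum, ← Finset.sum_mul, mul_left_comm, ← mul_assoc (size (t i)), hcut]
      _ = (n + 1)! * ∏ i, C (t i) := by
          rw [Finset.sum_congr rfl fun i _ => by
            rw [mul_assoc (size (t i)), ← Finset.prod_eq_mul_prod_sdiff_singleton_of_mem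
              (mem_univ i) (fun i => C (t i))], ← Finset.mul_sum, ← Finset.sum_mul, hn,
            Nat.factorial_succ]
          ring

variable {N : ℕ}

lemma IsTree.dropLast_mem {s : Finset (Node N)} (hs : IsTree s) {v : Node N} (hv : v ∈ s)
    (hne : v ≠ []) : v.dropLast ∈ s :=
  hs v hv _ _ (List.dropLast_append_getLast hne).symm

lemma IsTree.nil_mem {s : Finset (Node N)} (hs : IsTree s) (hne : s.Nonempty) :
    ([] : Node N) ∈ s := by
  obtain ⟨v, hv, hmin⟩ := s.exists_min_image List.length hne
  by_contra hnil
  have hne : v ≠ [] := by rintro rfl; exact hnil hv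
  have := hmin _ (hs.dropLast_mem hv hne)
  rw [List.length_dropLast] at this
  have := List.length_pos_iff.2 hne
  omega

lemma isTree_singleton_iff {v : Node N} : IsTree {v} ↔ v = [] := by
  refine ⟨fun h => (Finset.mem_singleton.1 (h.nil_mem (by simp))).symm, ?_⟩
  rintro rfl v hv w j rfl
  simp at hv

def children (s : Finset (Node N)) : Finset (Node N) :=
  s.biUnion fun v => (univ : Finset (Fin N)).image fun j => v ++ [j]

lemma mem_children {s : Finset (Node N)} {v : Node N} :
    v ∈ children s ↔ ∃ u ∈ s, ∃ j : Fin N, v = u ++ [j] := by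
  simp [children, eq_comm]

lemma leavesOf_of_nonempty {s : Finset (Node N)} (hs : s.Nonempty) :
    leavesOf s = children s \ s :=
  if_neg hs.ne_empty

lemma notMem_of_mem_leavesOf {s : Finset (Node N)} {v : Node N} (hv : v ∈ leavesOf s) :
    v ∉ s := by
  rcases s.eq_empty_or_nonempty with rfl | hs
  · simp
  · rw [leavesOf_of_nonempty hs] at hv
    exact (Finset.mem_sdiff.1 hv).2

lemma mem_leavesOf {s : Finset (Node N)} (hs : IsTree s) {v : Node N} :
    v ∈ leavesOf s ↔ v ∉ s ∧ IsTree (insert v s) := by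
  rcases s.eq_empty_or_nonempty with rfl | hne
  · simp [leavesOf, isTree_singleton_iff]
  rw [leavesOf_of_nonempty hne, Finset.mem_sdiff, mem_children]
  refine ⟨fun ⟨⟨u, hu, j, huv⟩, hvs⟩ => ⟨hvs, ?_⟩,
    fun ⟨hvs, hins⟩ => ⟨?_, hvs⟩⟩
  · intro x hx w r hxw
    rcases Finset.mem_insert.1 hx with rfl | hx
    · obtain ⟨rfl, -⟩ := List.append_inj' (huv.symm.trans hxw) rfl
      exact Finset.mem_insert_of_mem hu
    · exact Finset.mem_insert_of_mem (hs x hx w r hxw)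
  · have hv : v ≠ [] := by rintro rfl; exact hvs (hs.nil_mem hne)
    refine ⟨v.dropLast, ?_, v.getLast hv, (List.dropLast_append_getLast hv).symm⟩
    have hlen : v.dropLast ≠ v := fun h => by
      have := congrArg List.length h
      rw [List.length_dropLast] at this
      have := List.length_pos_iff.2 hv
      omega
    simpa [hlen] using hins.dropLast_mem (Finset.mem_insert_self v s) hv

lemma card_children (s : Finset (Node N)) : #(children s) = N * #s := by
  rw [children, Finset.card_biUnion]
  · have hinj (v : Node N) : Function.Injective fun j : Fin N => v ++ [j] := fun _ _ h => by
      simpa using h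
    simp [Finset.card_image_of_injective _ (hinj _), mul_comm]
  · intro x _ y _ hxy
    simp only [Function.onFun, Finset.disjoint_left, Finset.mem_image]
    rintro _ ⟨j, -, rfl⟩ ⟨j', -, h⟩
    exact hxy (List.append_inj' h rfl).1.symm

lemma inter_children {s : Finset (Node N)} (hs : IsTree s) :
    s ∩ children s = s.erase [] := by
  ext v
  simp only [Finset.mem_inter, Finset.mem_erase, mem_children]
  constructor
  · rintro ⟨hv, u, -, j, rfl⟩
    exact ⟨by simp, hv⟩
  · rintro ⟨hne, hv⟩
    exact ⟨hv, _, hs.dropLast_mem hv hne, _, (List.dropLast_append_getLast hne).symm⟩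

lemma card_leavesOf (hN : 1 ≤ N) {s : Finset (Node N)} (hs : IsTree s) :
    #(leavesOf s) = nleaves N #s := by
  rcases s.eq_empty_or_nonempty with rfl | hne
  · simp [leavesOf, nleaves]
  have hroot := hs.nil_mem hne
  have hcard := Finset.card_pos.2 hne
  rw [leavesOf_of_nonempty hne, Finset.card_sdiff, card_children, inter_children hs,
    Finset.card_erase_of_mem hroot, nleaves]
  obtain ⟨m, rfl⟩ : ∃ m, N = m + 1 := ⟨N - 1, by omega⟩
  simp only [add_mul, one_mul, Nat.add_sub_cancel]
  omega

def maximalNodes (u : Finset (Node N)) : Finset (Node N) :=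
  {w ∈ u | ∀ j : Fin N, w ++ [j] ∉ u}

lemma mem_maximalNodes {u : Finset (Node N)} {w : Node N} :
    w ∈ maximalNodes u ↔ w ∈ u ∧ ∀ j : Fin N, w ++ [j] ∉ u :=
  Finset.mem_filter

lemma maximalNodes_nonempty {u : Finset (Node N)} (hu : u.Nonempty) :
    (maximalNodes u).Nonempty := by
  obtain ⟨w, hw, hmax⟩ := u.exists_max_image List.length hu
  refine ⟨w, mem_maximalNodes.2 ⟨hw, fun j hj => ?_⟩⟩
  have := hmax _ hj
  simp at this

lemma IsTree.erase {u : Finset (Node N)} (hu : IsTree u) {w : Node N}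
    (hw : w ∈ maximalNodes u) : IsTree (u.erase w) := by
  intro v hv p j hp
  refine Finset.mem_erase.2 ⟨?_, hu v (Finset.mem_of_mem_erase hv) p j hp⟩
  rintro rfl
  exact (mem_maximalNodes.1 hw).2 j (hp ▸ Finset.mem_of_mem_erase hv)

lemma mem_leavesOf_and_insert_eq_iff {s u : Finset (Node N)} (hs : IsTree s) (hu : IsTree u)
    {v : Node N} :
    (v ∈ leavesOf s ∧ insert v s = u) ↔ (v ∈ maximalNodes u ∧ u.erase v = s) := by
  rw [mem_leavesOf hs, mem_maximalNodes]
  constructor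
  · rintro ⟨⟨hvs, -⟩, rfl⟩
    refine ⟨⟨Finset.mem_insert_self v s, fun j hj => ?_⟩, Finset.erase_insert hvs⟩
    rcases Finset.mem_insert.1 hj with h | h
    · simpa using congrArg List.length h
    · exact hvs (hs _ h v j rfl)
  · rintro ⟨⟨hvu, -⟩, rfl⟩
    rw [Finset.insert_erase hvu]
    exact ⟨⟨Finset.notMem_erase v u, hu⟩, rfl⟩

/-- Histories of `n` steps of the growth process: the inserted nodes, most recent first. -/
def histories (N : ℕ) : ℕ → Finset (List (Node N))
  | 0 => {[]}
  | n + 1 => (histories N n).biUnion fun l => (leavesOf l.toFinset).image (· :: l)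

@[simp] lemma mem_histories_zero {l : List (Node N)} : l ∈ histories N 0 ↔ l = [] :=
  Finset.mem_singleton

@[simp] lemma nil_notMem_histories_succ {n : ℕ} : [] ∉ histories N (n + 1) := by
  simp [histories]

@[simp] lemma cons_mem_histories_succ {n : ℕ} {v : Node N} {l : List (Node N)} :
    v :: l ∈ histories N (n + 1) ↔ l ∈ histories N n ∧ v ∈ leavesOf l.toFinset := by
  simp only [histories, Finset.mem_biUnion, Finset.mem_image, List.cons.injEq]
  constructor
  · rintro ⟨l, hl, v, hv, rfl, rfl⟩
    exact ⟨hl, hv⟩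
  · rintro ⟨hl, hv⟩
    exact ⟨l, hl, v, hv, rfl, rfl⟩

lemma length_of_mem_histories {n : ℕ} {l : List (Node N)} (hl : l ∈ histories N n) :
    l.length = n := by
  induction n generalizing l with
  | zero => simp_all
  | succ n ih =>
    obtain _ | ⟨v, l⟩ := l
    · simp at hl
    · simp [ih (cons_mem_histories_succ.1 hl).1]

lemma isTree_of_mem_histories {n : ℕ} {l : List (Node N)} (hl : l ∈ histories N n) :
    IsTree l.toFinset := by
  induction n generalizing l with
  | zero => simp_all [IsTree]
  | succ n ih =>
    obtain _ | ⟨v, l⟩ := l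
    · simp at hl
    · obtain ⟨hl, hv⟩ := cons_mem_histories_succ.1 hl
      simpa using ((mem_leavesOf (ih hl)).1 hv).2

lemma card_toFinset_of_mem_histories {n : ℕ} {l : List (Node N)} (hl : l ∈ histories N n) :
    #l.toFinset = n := by
  induction n generalizing l with
  | zero => simp_all
  | succ n ih =>
    obtain _ | ⟨v, l⟩ := l
    · simp at hl
    · obtain ⟨hl, hv⟩ := cons_mem_histories_succ.1 hl
      rw [List.toFinset_cons, Finset.card_insert_of_notMem (notMem_of_mem_leavesOf hv), ih hl]

lemma card_filter_histories_succ (p : Finset (Node N) → Prop) [DecidablePred p] (n : ℕ) :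
    #{l ∈ histories N (n + 1) | p l.toFinset} =
      ∑ l ∈ histories N n, #{v ∈ leavesOf l.toFinset | p (insert v l.toFinset)} := by
  rw [histories, Finset.filter_biUnion, Finset.card_biUnion]
  · refine Finset.sum_congr rfl fun l _ => ?_
    rw [Finset.filter_image, Finset.card_image_of_injective _ fun _ _ h => (List.cons.inj h).1]
    simp
  · intro l _ l' _ hll'
    simp only [Function.onFun, Finset.disjoint_left, Finset.mem_filter, Finset.mem_image]
    rintro _ ⟨⟨v, -, rfl⟩, -⟩ ⟨⟨v', -, h⟩, -⟩
    exact hll' (List.cons.inj h).2.symm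

lemma card_histories (hN : 1 ≤ N) (n : ℕ) :
    #(histories N n) = ∏ r ∈ range n, nleaves N r := by
  induction n with
  | zero => rfl
  | succ n ih =>
    have := card_filter_histories_succ (N := N) (fun _ => True) n
    simp only [Finset.filter_true] at this
    rw [this, Finset.prod_range_succ, ← ih, Finset.card_eq_sum_ones, Finset.sum_mul]
    refine Finset.sum_congr rfl fun l hl => ?_
    rw [card_leavesOf hN (isTree_of_mem_histories hl), card_toFinset_of_mem_histories hl, one_mul]

/-- The tree after `m` steps of the history `l`. -/
def pathOf (l : List (Node N)) (m : ℕ) : Finset (Node N) :=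
  (l.drop (l.length - m)).toFinset

lemma pathOf_zero (l : List (Node N)) : pathOf l 0 = ∅ := by
  simp [pathOf]

lemma pathOf_length (l : List (Node N)) : pathOf l l.length = l.toFinset := by
  simp [pathOf]

lemma pathOf_cons_of_le {l : List (Node N)} {m : ℕ} (v : Node N) (hm : m ≤ l.length) :
    pathOf (v :: l) m = pathOf l m := by
  rw [pathOf, pathOf, List.length_cons, Nat.sub_add_comm hm, List.drop_succ_cons]

lemma step_pathOf {n m : ℕ} {l : List (Node N)} (hl : l ∈ histories N n) (hm : m < n) :
    Step (pathOf l m) (pathOf l (m + 1)) := by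
  induction n generalizing l with
  | zero => omega
  | succ n ih =>
    obtain _ | ⟨v, l⟩ := l
    · simp at hl
    obtain ⟨hl, hv⟩ := cons_mem_histories_succ.1 hl
    have hlen := length_of_mem_histories hl
    rcases Nat.lt_succ_iff_lt_or_eq.1 hm with hm | rfl
    · rw [pathOf_cons_of_le v (by omega), pathOf_cons_of_le v (by omega)]
      exact ih hl hm
    · rw [pathOf_cons_of_le v hlen.ge, ← hlen, pathOf_length, ← List.length_cons,
        pathOf_length, List.toFinset_cons]
      exact ⟨v, hv, rfl⟩

lemma eq_of_pathOf_eq {n : ℕ} {l l' : List (Node N)} (hl : l ∈ histories N n)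
    (hl' : l' ∈ histories N n) (h : ∀ m ≤ n, pathOf l m = pathOf l' m) : l = l' := by
  induction n generalizing l l' with
  | zero => simp_all
  | succ n ih =>
    obtain _ | ⟨v, l⟩ := l
    · simp at hl
    obtain _ | ⟨v', l'⟩ := l'
    · simp at hl'
    obtain ⟨hl, hv⟩ := cons_mem_histories_succ.1 hl
    obtain ⟨hl', -⟩ := cons_mem_histories_succ.1 hl'
    have hlen := length_of_mem_histories hl
    have hlen' := length_of_mem_histories hl'
    obtain rfl : l = l' := ih hl hl' fun m hm => by
      simpa [pathOf_cons_of_le, hlen, hlen', hm] using h m (by omega)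
    have hlast := h (n + 1) le_rfl
    simp only [pathOf, List.length_cons, hlen, Nat.sub_self, List.drop_zero,
      List.toFinset_cons] at hlast
    have := hlast ▸ Finset.mem_insert_self v l.toFinset
    rw [(Finset.mem_insert.1 this).resolve_right (notMem_of_mem_leavesOf hv)]

def numHistories (s : Finset (Node N)) : ℕ :=
  #{l ∈ histories N #s | l.toFinset = s}

lemma card_filter_toFinset_eq {n : ℕ} {s : Finset (Node N)} (hs : #s = n) :
    #{l ∈ histories N n | l.toFinset = s} = numHistories s := by
  rw [numHistories, hs]

lemma numHistories_eq_sum {u : Finset (Node N)} (hu : IsTree u) (hne : u.Nonempty) :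
    numHistories u = ∑ w ∈ maximalNodes u, numHistories (u.erase w) := by
  obtain ⟨n, hn⟩ : ∃ n, #u = n + 1 := ⟨#u - 1, by have := hne.card_pos; omega⟩
  have herase {w} (hw : w ∈ maximalNodes u) : #(u.erase w) = n := by
    rw [Finset.card_erase_of_mem (mem_maximalNodes.1 hw).1, hn, Nat.add_sub_cancel]
  rw [numHistories, hn, card_filter_histories_succ (· = u)]
  calc ∑ l ∈ histories N n, #{v ∈ leavesOf l.toFinset | insert v l.toFinset = u}
      = ∑ l ∈ histories N n, ∑ w ∈ maximalNodes u,
          if u.erase w = l.toFinset then 1 else 0 := by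
        refine Finset.sum_congr rfl fun l hl => ?_
        rw [← Finset.card_filter]
        congr 1
        ext v
        simp only [Finset.mem_filter]
        exact mem_leavesOf_and_insert_eq_iff (isTree_of_mem_histories hl) hu
    _ = ∑ w ∈ maximalNodes u, numHistories (u.erase w) := by
        rw [Finset.sum_comm]
        refine Finset.sum_congr rfl fun w hw => ?_
        rw [← card_filter_toFinset_eq (herase hw), Finset.card_filter]
        simp only [eq_comm]

lemma numHistories_pos {u : Finset (Node N)} (hu : IsTree u) : 0 < numHistories u := by
  induction hn : #u generalizing u with
  | zero =>
    obtain rfl := Finset.card_eq_zero.1 hn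
    simp [numHistories, histories, Finset.filter_singleton]
  | succ n ih =>
    have hne : u.Nonempty := Finset.card_pos.1 (by omega)
    obtain ⟨w, hw⟩ := maximalNodes_nonempty hne
    rw [numHistories_eq_sum hu hne]
    refine Finset.sum_pos' (fun _ _ => Nat.zero_le _) ⟨w, hw, ih (hu.erase hw) ?_⟩
    rw [Finset.card_erase_of_mem (mem_maximalNodes.1 hw).1, hn, Nat.add_sub_cancel]

lemma mem_image_toFinset_histories {n : ℕ} {s : Finset (Node N)} :
    s ∈ (histories N n).image List.toFinset ↔ IsTree s ∧ #s = n := by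
  rw [Finset.mem_image]
  constructor
  · rintro ⟨l, hl, rfl⟩
    exact ⟨isTree_of_mem_histories hl, card_toFinset_of_mem_histories hl⟩
  · rintro ⟨hs, rfl⟩
    obtain ⟨l, hl⟩ := Finset.card_pos.1 (numHistories_pos hs)
    exact ⟨l, Finset.mem_filter.1 hl⟩

lemma sum_numHistories (n : ℕ) :
    ∑ s ∈ (histories N n).image List.toFinset, numHistories s = #(histories N n) := by
  rw [Finset.card_eq_sum_card_image List.toFinset]
  exact Finset.sum_congr rfl fun s hs =>
    (card_filter_toFinset_eq (mem_image_toFinset_histories.1 hs).2).symm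

lemma mem_subtree {s : Finset (Node N)} {j : Fin N} {w : Node N} :
    w ∈ subtree s j ↔ j :: w ∈ s := by
  simp only [subtree, Finset.mem_image, Finset.mem_filter]
  constructor
  · rintro ⟨_ | ⟨a, v⟩, ⟨hv, hh⟩, rfl⟩
    · simp at hh
    · simp_all
  · exact fun h => ⟨j :: w, ⟨h, rfl⟩, rfl⟩

lemma IsTree.subtree {s : Finset (Node N)} (hs : IsTree s) (j : Fin N) :
    IsTree (subtree s j) := by
  intro v hv w r rfl
  rw [mem_subtree] at hv ⊢
  exact hs _ hv (j :: w) r rfl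

def ofSubtrees (t : Fin N → Finset (Node N)) : Finset (Node N) :=
  insert [] (univ.biUnion fun j => (t j).map ⟨(j :: ·), List.cons_injective⟩)

@[simp] lemma nil_mem_ofSubtrees (t : Fin N → Finset (Node N)) : [] ∈ ofSubtrees t :=
  Finset.mem_insert_self _ _

@[simp] lemma cons_mem_ofSubtrees {t : Fin N → Finset (Node N)} {j : Fin N} {w : Node N} :
    j :: w ∈ ofSubtrees t ↔ w ∈ t j := by
  simp [ofSubtrees]

lemma subtree_ofSubtrees (t : Fin N → Finset (Node N)) (j : Fin N) :
    subtree (ofSubtrees t) j = t j := by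
  ext w
  rw [mem_subtree, cons_mem_ofSubtrees]

lemma ofSubtrees_subtree {s : Finset (Node N)} (hs : [] ∈ s) :
    ofSubtrees (subtree s) = s := by
  ext (_ | ⟨j, w⟩)
  · simp [hs]
  · rw [cons_mem_ofSubtrees, mem_subtree]

lemma subtree_eq_iff {s : Finset (Node N)} (hs : [] ∈ s) {t : Fin N → Finset (Node N)} :
    subtree s = t ↔ s = ofSubtrees t := by
  constructor
  · rintro rfl
    exact (ofSubtrees_subtree hs).symm
  · rintro rfl
    exact funext (subtree_ofSubtrees t)

lemma isTree_ofSubtrees {t : Fin N → Finset (Node N)} (ht : ∀ j, IsTree (t j)) :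
    IsTree (ofSubtrees t) := by
  rintro _ hv (_ | ⟨j, w⟩) r rfl
  · exact nil_mem_ofSubtrees t
  · rw [List.cons_append, cons_mem_ofSubtrees] at hv
    exact cons_mem_ofSubtrees.2 (ht j _ hv w r rfl)

lemma card_ofSubtrees (t : Fin N → Finset (Node N)) : #(ofSubtrees t) = ∑ j, #(t j) + 1 := by
  rw [ofSubtrees, Finset.card_insert_of_notMem (by simp), Finset.card_biUnion]
  · simp
  · intro j _ j' _ hjj'
    simp only [Function.onFun, Finset.disjoint_left, Finset.mem_map, Function.Embedding.coeFn_mk]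
    rintro _ ⟨w, -, rfl⟩ ⟨w', -, h⟩
    exact hjj' (List.cons.inj h).1.symm

lemma erase_ofSubtrees (t : Fin N → Finset (Node N)) (j : Fin N) (w : Node N) :
    (ofSubtrees t).erase (j :: w) = ofSubtrees (Function.update t j ((t j).erase w)) := by
  ext (_ | ⟨r, v⟩)
  · simp
  · rcases eq_or_ne r j with rfl | hrj
    · simp
    · simp [hrj]

lemma sum_maximalNodes_ofSubtrees {M : Type*} [AddCommMonoid M] {t : Fin N → Finset (Node N)}
    (ht : ∀ j, IsTree (t j)) (hne : ∃ j, (t j).Nonempty) (g : Node N → M) :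
    ∑ v ∈ maximalNodes (ofSubtrees t), g v =
      ∑ j, ∑ w ∈ maximalNodes (t j), g (j :: w) := by
  have hmax : maximalNodes (ofSubtrees t) =
      univ.biUnion fun j => (maximalNodes (t j)).map ⟨(j :: ·), List.cons_injective⟩ := by
    ext (_ | ⟨j, w⟩)
    · obtain ⟨j, hj⟩ := hne
      simpa [mem_maximalNodes] using ⟨j, (ht j).nil_mem hj⟩
    · simp [mem_maximalNodes]
  rw [hmax, Finset.sum_biUnion]
  · simp
  · intro j _ j' _ hjj'
    simp only [Function.onFun, Finset.disjoint_left, Finset.mem_map, Function.Embedding.coeFn_mk]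
    rintro _ ⟨w, -, rfl⟩ ⟨w', -, h⟩
    exact hjj' (List.cons.inj h).1.symm

lemma numHistories_ofSubtrees_eq_sum {t : Fin N → Finset (Node N)} (ht : ∀ j, IsTree (t j))
    (hne : ∃ j, (t j).Nonempty) :
    numHistories (ofSubtrees t) = ∑ j, ∑ w ∈ maximalNodes (t j),
      numHistories (ofSubtrees (Function.update t j ((t j).erase w))) := by
  rw [numHistories_eq_sum (isTree_ofSubtrees ht) ⟨[], nil_mem_ofSubtrees t⟩,
    sum_maximalNodes_ofSubtrees ht hne]
  simp only [erase_ofSubtrees]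

lemma numHistories_ofSubtrees_empty :
    numHistories (ofSubtrees fun _ : Fin N => ∅) = 1 := by
  have : ofSubtrees (fun _ : Fin N => ∅) = {[]} := by
    ext (_ | ⟨j, w⟩) <;> simp
  simp [this, numHistories, histories, leavesOf, Finset.filter_singleton]

theorem numHistories_ofSubtrees_mul {t : Fin N → Finset (Node N)} (ht : ∀ j, IsTree (t j)) :
    numHistories (ofSubtrees t) * ∏ j, (#(t j))! =
      (∑ j, #(t j))! * ∏ j, numHistories (t j) := by
  refine mul_prod_factorial_eq_of_recursion IsTree Finset.card maximalNodes Finset.erase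
    numHistories (fun t => numHistories (ofSubtrees t)) (fun _ _ hu hw => hu.erase hw)
    (fun u w hw => ?_) (fun u hu h => numHistories_eq_sum hu (Finset.card_ne_zero.1 h))
    (fun t ht h => numHistories_ofSubtrees_eq_sum ht ?_) (fun t h => ?_) t ht
  · have hwu := (mem_maximalNodes.1 hw).1
    rw [Finset.card_erase_of_mem hwu, Nat.sub_add_cancel (Finset.card_pos.2 ⟨w, hwu⟩)]
  · obtain ⟨j, -, hj⟩ := Finset.exists_ne_zero_of_sum_ne_zero h
    exact ⟨j, Finset.card_ne_zero.1 hj⟩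
  · obtain rfl : t = fun _ => ∅ := funext fun j => Finset.card_eq_zero.1 (h j)
    rw [numHistories_ofSubtrees_empty]
    simp [numHistories, histories, Finset.filter_singleton]

lemma nil_mem_of_mem_histories {n : ℕ} {l : List (Node N)} (hl : l ∈ histories N (n + 1)) :
    [] ∈ l.toFinset :=
  (isTree_of_mem_histories hl).nil_mem
    (Finset.card_pos.1 (by rw [card_toFinset_of_mem_histories hl]; omega))

lemma card_filter_subtree_eq {n : ℕ} {t : Fin N → Finset (Node N)} (ht : ∑ j, #(t j) = n) :
    #{l ∈ histories N (n + 1) | ∀ j, subtree l.toFinset j = t j} =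
      numHistories (ofSubtrees t) := by
  rw [← card_filter_toFinset_eq (by rw [card_ofSubtrees, ht])]
  refine congrArg card (Finset.filter_congr fun l hl => ?_)
  rw [← subtree_eq_iff (nil_mem_of_mem_histories hl), funext_iff]

theorem card_filter_card_subtree_mul (hN : 1 ≤ N) (i : Fin N → ℕ) :
    #{l ∈ histories N (∑ j, i j + 1) | ∀ j, #(subtree l.toFinset j) = i j} * ∏ j, (i j)! =
      (∑ j, i j)! * ∏ j, ∏ r ∈ range (i j), nleaves N r := by
  set S := Fintype.piFinset fun j => (histories N (i j)).image List.toFinset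
  have hS {t : Fin N → Finset (Node N)} : t ∈ S ↔ ∀ j, IsTree (t j) ∧ #(t j) = i j := by
    simp only [S, Fintype.mem_piFinset, mem_image_toFinset_histories]
  have hfiber : #{l ∈ histories N (∑ j, i j + 1) | ∀ j, #(subtree l.toFinset j) = i j} =
      ∑ t ∈ S, numHistories (ofSubtrees t) := by
    rw [Finset.card_eq_sum_card_fiberwise (f := fun l => subtree l.toFinset) (t := S)]
    · refine Finset.sum_congr rfl fun t ht => ?_
      have hsize (j : Fin N) : #(t j) = i j := ((hS.1 ht) j).2
      rw [Finset.filter_filter, ← card_filter_subtree_eq (n := ∑ j, i j) (by simp only [hsize])]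
      refine congrArg card (Finset.filter_congr fun l _ => ?_)
      rw [funext_iff]
      exact ⟨And.right, fun h => ⟨fun j => by rw [h, hsize], h⟩⟩
    · intro l hl
      obtain ⟨hl, hsize⟩ := Finset.mem_filter.1 hl
      exact hS.2 fun j => ⟨(isTree_of_mem_histories hl).subtree j, hsize j⟩
  rw [hfiber]
  calc (∑ t ∈ S, numHistories (ofSubtrees t)) * ∏ j, (i j)!
      = ∑ t ∈ S, (∑ j, i j)! * ∏ j, numHistories (t j) := by
        rw [Finset.sum_mul]
        refine Finset.sum_congr rfl fun t ht => ?_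
        have hsize (j : Fin N) : #(t j) = i j := ((hS.1 ht) j).2
        simpa only [hsize] using numHistories_ofSubtrees_mul fun j => ((hS.1 ht) j).1
    _ = (∑ j, i j)! * ∏ j, ∏ r ∈ range (i j), nleaves N r := by
        rw [← Finset.mul_sum, ← Finset.prod_univ_sum]
        simp only [sum_numHistories, card_histories hN]

lemma prod_mul_numHistories_ofSubtrees (hN : 1 ≤ N) {t : Fin N → Finset (Node N)}
    (ht : ∀ j, IsTree (t j)) :
    (∏ j, ∏ r ∈ range #(t j), nleaves N r) * numHistories (ofSubtrees t) =
      #{l ∈ histories N (∑ j, #(t j) + 1) | ∀ j, #(subtree l.toFinset j) = #(t j)} *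
        ∏ j, numHistories (t j) := by
  have hsizes := card_filter_card_subtree_mul hN fun j => #(t j)
  have hcount := numHistories_ofSubtrees_mul ht
  refine Nat.eq_of_mul_eq_mul_right
    (Finset.prod_pos (s := univ) fun j _ => Nat.factorial_pos #(t j)) ?_
  calc _ = (∏ j, ∏ r ∈ range #(t j), nleaves N r) *
        (numHistories (ofSubtrees t) * ∏ j, (#(t j))!) := by ring
    _ = (∑ j, #(t j))! * (∏ j, ∏ r ∈ range #(t j), nleaves N r) *
          ∏ j, numHistories (t j) := by
        rw [hcount]; ring
    _ = _ := by rw [← hsizes]; ring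

section GrowthLaw

variable {Ω : Type*} {T : ℕ → Ω → Finset (Node N)}

def pathEvent (T : ℕ → Ω → Finset (Node N)) (l : List (Node N)) : Set Ω :=
  {ω | ∀ m ≤ l.length, T m ω = pathOf l m}

lemma pairwiseDisjoint_pathEvent (n : ℕ) :
    (histories N n : Set (List (Node N))).PairwiseDisjoint (pathEvent T) := by
  intro l hl l' hl' hne
  refine Set.disjoint_left.2 fun ω hω hω' => hne (eq_of_pathOf_eq hl hl' fun m hm => ?_)
  rw [← hω m (by rwa [length_of_mem_histories hl]),
    hω' m (by rwa [length_of_mem_histories hl'])]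

variable [MeasurableSpace Ω] {P : Measure Ω}

def HasGrowthLaw (P : Measure Ω) (T : ℕ → Ω → Finset (Node N)) : Prop :=
  ∀ (n : ℕ) (s : ℕ → Finset (Node N)), s 0 = ∅ → (∀ k < n, Step (s k) (s (k + 1))) →
    P {ω | ∀ k ≤ n, T k ω = s k} = ∏ k ∈ range n, ((nleaves N k : ℝ≥0∞))⁻¹

lemma measurableSet_pathEvent
    (hmeas : ∀ (k : ℕ) (s : Finset (Node N)), MeasurableSet {ω | T k ω = s})
    (l : List (Node N)) : MeasurableSet (pathEvent T l) := by
  simp only [pathEvent, Set.ofPred_forall]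
  exact .iInter fun m => .iInter fun _ => hmeas m _

lemma measurableSet_setOf_apply
    (hmeas : ∀ (k : ℕ) (s : Finset (Node N)), MeasurableSet {ω | T k ω = s})
    (k : ℕ) (Q : Finset (Node N) → Prop) : MeasurableSet {ω | Q (T k ω)} := by
  have : {ω | Q (T k ω)} = ⋃ s ∈ {s | Q s}, {ω | T k ω = s} := by ext; simp
  rw [this]
  exact .biUnion (Set.to_countable _) fun s _ => hmeas k s

lemma HasGrowthLaw.measure_pathEvent (hlaw : HasGrowthLaw P T) {n : ℕ} {l : List (Node N)}
    (hl : l ∈ histories N n) :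
    P (pathEvent T l) = ∏ r ∈ range n, ((nleaves N r : ℝ≥0∞))⁻¹ := by
  rw [pathEvent, length_of_mem_histories hl]
  exact hlaw n _ (pathOf_zero l) fun m hm => step_pathOf hl hm

lemma prod_nleaves_ne_zero (n : ℕ) : ∏ r ∈ range n, (nleaves N r : ℝ≥0∞) ≠ 0 :=
  Finset.prod_ne_zero_iff.2 fun _ _ => by simp [nleaves]

lemma prod_nleaves_ne_top (n : ℕ) : ∏ r ∈ range n, (nleaves N r : ℝ≥0∞) ≠ ⊤ :=
  ENNReal.prod_ne_top fun _ _ => ENNReal.natCast_ne_top _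

/-- Every history of length `k` has probability `∏ r < k, 1 / f_r`, and there are `∏ r < k, f_r`
of them, so almost surely the process follows one of them. -/
theorem HasGrowthLaw.measure_setOf_eq_card_div [IsProbabilityMeasure P] (hlaw : HasGrowthLaw P T)
    (hN : 1 ≤ N) (hmeas : ∀ (k : ℕ) (s : Finset (Node N)), MeasurableSet {ω | T k ω = s})
    (k : ℕ) (Q : Finset (Node N) → Prop) [DecidablePred Q] :
    P {ω | Q (T k ω)} =
      #{l ∈ histories N k | Q l.toFinset} / ∏ r ∈ range k, (nleaves N r : ℝ≥0∞) := by
  have hsum (s : Finset (List (Node N))) (hs : s ⊆ histories N k) :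
      P (⋃ l ∈ s, pathEvent T l) = #s / ∏ r ∈ range k, (nleaves N r : ℝ≥0∞) := by
    rw [measure_biUnion_finset ((pairwiseDisjoint_pathEvent k).subset hs)
        fun l _ => measurableSet_pathEvent hmeas l,
      Finset.sum_congr rfl fun l hl => hlaw.measure_pathEvent (hs hl), Finset.sum_const,
      nsmul_eq_mul, ← ENNReal.prod_inv_distrib fun _ _ _ _ _ => .inr (ENNReal.natCast_ne_top _),
      div_eq_mul_inv]
  have hfull : P (⋃ l ∈ histories N k, pathEvent T l)ᶜ = 0 := by
    rw [prob_compl_eq_zero_iff (Finset.measurableSet_biUnion _ fun l _ =>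
        measurableSet_pathEvent hmeas l), hsum _ subset_rfl, card_histories hN, Nat.cast_prod,
      ENNReal.div_self (prod_nleaves_ne_zero k) (prod_nleaves_ne_top k)]
  rw [← measure_inter_conull hfull, ← hsum _ (Finset.filter_subset _ _)]
  congr 1
  ext ω
  simp only [Set.mem_inter_iff, Set.mem_ofPred_eq, Set.mem_iUnion, Finset.mem_filter,
    exists_prop]
  constructor
  · rintro ⟨hQ, l, hl, hω⟩
    refine ⟨l, ⟨hl, ?_⟩, hω⟩
    rwa [← pathOf_length, ← hω _ le_rfl, length_of_mem_histories hl]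
  · rintro ⟨l, ⟨hl, hQ⟩, hω⟩
    refine ⟨?_, l, hl, hω⟩
    rwa [← pathOf_length, ← hω _ le_rfl, length_of_mem_histories hl] at hQ

variable [IsProbabilityMeasure P]

theorem HasGrowthLaw.measure_card_subtree_eq_pk (hlaw : HasGrowthLaw P T) (hN : 1 ≤ N)
    (hmeas : ∀ (k : ℕ) (s : Finset (Node N)), MeasurableSet {ω | T k ω = s})
    (i : Fin N → ℕ) :
    P {ω | ∀ j, #(subtree (T (∑ j, i j + 1) ω) j) = i j} = pk N (∑ j, i j + 1) i := by
  rw [hlaw.measure_setOf_eq_card_div hN hmeas _ fun s => ∀ j, #(subtree s j) = i j, pk,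
    Nat.add_sub_cancel, ← card_filter_card_subtree_mul hN i, Nat.cast_mul, Nat.cast_mul,
    mul_comm ((∏ j, (i j)! : ℕ) : ℝ≥0∞), ENNReal.mul_div_mul_right _ _
      (Nat.cast_ne_zero.2 (Finset.prod_ne_zero_iff.2 fun j _ => Nat.factorial_ne_zero _))
      (ENNReal.natCast_ne_top _), Nat.cast_prod]

theorem HasGrowthLaw.cond_subtree_eq (hlaw : HasGrowthLaw P T) (hN : 1 ≤ N)
    (hmeas : ∀ (k : ℕ) (s : Finset (Node N)), MeasurableSet {ω | T k ω = s})
    {t : Fin N → Finset (Node N)} (ht : ∀ j, IsTree (t j)) :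
    P[{ω | ∀ j, subtree (T (∑ j, #(t j) + 1) ω) j = t j} |
        {ω | ∀ j, #(subtree (T (∑ j, #(t j) + 1) ω) j) = #(t j)}] =
      ∏ j, P {ω | T #(t j) ω = t j} := by
  have hcount := prod_mul_numHistories_ofSubtrees hN ht
  set A := #{l ∈ histories N (∑ j, #(t j) + 1) | ∀ j, #(subtree l.toFinset j) = #(t j)}
  have hA : A ≠ 0 := by
    rintro hA
    rw [hA, zero_mul, mul_eq_zero] at hcount
    exact hcount.elim (Finset.prod_ne_zero_iff.2 fun j _ =>
      Finset.prod_ne_zero_iff.2 fun r _ => Nat.succ_ne_zero _)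
      (numHistories_pos (isTree_ofSubtrees ht)).ne'
  have hsub : {ω | ∀ j, subtree (T (∑ j, #(t j) + 1) ω) j = t j} ⊆
      {ω | ∀ j, #(subtree (T (∑ j, #(t j) + 1) ω) j) = #(t j)} :=
    fun ω (hω : ∀ j, _) j => by rw [hω j]
  rw [cond_apply (measurableSet_setOf_apply hmeas _ fun s => ∀ j, #(subtree s j) = #(t j)),
    Set.inter_eq_self_of_subset_right hsub,
    hlaw.measure_setOf_eq_card_div hN hmeas _ fun s => ∀ j, #(subtree s j) = #(t j),
    hlaw.measure_setOf_eq_card_div hN hmeas _ fun s => ∀ j, subtree s j = t j,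
    card_filter_subtree_eq rfl,
    inv_div_mul_div_cancel_right (prod_nleaves_ne_zero _) (prod_nleaves_ne_top _),
    Finset.prod_congr rfl fun j _ => hlaw.measure_setOf_eq_card_div hN hmeas _ (· = t j),
    ENNReal.prod_div_distrib fun _ _ _ _ _ => .inr (prod_nleaves_ne_top _),
    ENNReal.div_eq_div_iff (Finset.prod_ne_zero_iff.2 fun j _ => prod_nleaves_ne_zero _)
      (ENNReal.prod_ne_top fun j _ => prod_nleaves_ne_top _) (Nat.cast_ne_zero.2 hA)
      (ENNReal.natCast_ne_top _)]
  exact_mod_cast hcount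

end GrowthLaw

theorem statement0_general {Ω : Type*} [MeasurableSpace Ω] (P : Measure Ω) [IsProbabilityMeasure P]
    (N : ℕ) (hN : 2 ≤ N)
    (T : ℕ → Ω → Finset (Node N))
    (hmeas : ∀ (k : ℕ) (s : Finset (Node N)), MeasurableSet {ω | T k ω = s})
    (hlaw : ∀ (n : ℕ) (s : ℕ → Finset (Node N)), s 0 = ∅ →
      (∀ k < n, Step (s k) (s (k + 1))) →
      P {ω | ∀ k ≤ n, T k ω = s k} = ∏ k ∈ Finset.range n, ((nleaves N k : ℝ≥0∞))⁻¹)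
    (k : ℕ) (hk : 1 ≤ k) (i : Fin N → ℕ) (hi : ∑ j, i j = k - 1) :
    P {ω | ∀ j, (subtree (T k ω) j).card = i j} = pk N k i ∧
    ∀ t : Fin N → Finset (Node N), (∀ j, IsTree (t j)) → (∀ j, (t j).card = i j) →
      ProbabilityTheory.cond P {ω | ∀ j, (subtree (T k ω) j).card = i j}
          {ω | ∀ j, subtree (T k ω) j = t j}
        = ∏ j, P {ω | T (i j) ω = t j} := by
  have hlaw : HasGrowthLaw P T := hlaw
  have hN₁ : 1 ≤ N := by omega
  obtain rfl : k = ∑ j, i j + 1 := by omega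
  refine ⟨hlaw.measure_card_subtree_eq_pk hN₁ hmeas i, fun t ht hti => ?_⟩
  obtain rfl : i = fun j => #(t j) := funext fun j => (hti j).symm
  exact hlaw.cond_subtree_eq hN₁ hmeas ht

/-- For a random `N`-ary recursive tree process `(T_k)`, the vector of
root-subtree sizes of `T_k` has law `p_k`, and conditionally on the subtree sizes the `N`
root subtrees are independent random recursive trees of the given sizes. -/
theorem statement0 {Ω : Type*} [MeasurableSpace Ω] (P : Measure Ω) [IsProbabilityMeasure P]
    (N : ℕ) (hN : 2 ≤ N)
    (T : ℕ → Ω → Finset (Node N))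
    (hmeas : ∀ (k : ℕ) (s : Finset (Node N)), MeasurableSet {ω | T k ω = s})
    (hinit : ∀ ω, T 0 ω = ∅)
    (hlaw : ∀ (n : ℕ) (s : ℕ → Finset (Node N)), s 0 = ∅ →
      (∀ k < n, Step (s k) (s (k + 1))) →
      P {ω | ∀ k ≤ n, T k ω = s k} = ∏ k ∈ Finset.range n, ((nleaves N k : ℝ≥0∞))⁻¹)
    (k : ℕ) (hk : 1 ≤ k) (i : Fin N → ℕ) (hi : ∑ j, i j = k - 1) :
    P {ω | ∀ j, (subtree (T k ω) j).card = i j} = pk N k i ∧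
    ∀ t : Fin N → Finset (Node N), (∀ j, IsTree (t j)) → (∀ j, (t j).card = i j) →
      ProbabilityTheory.cond P {ω | ∀ j, (subtree (T k ω) j).card = i j}
          {ω | ∀ j, subtree (T k ω) j = t j}
        = ∏ j, P {ω | T (i j) ω = t j} :=
  statement0_general P N hN T hmeas hlaw k hk i hi

end KacNary
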